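/- arXiv:1503.01036 — 2 statements merged into one kernel-verified Lean document; each statement's English description precedes it below -/
import Mathlib

section
/- Let X, Y be metric spaces, f: X → X, g: Y → Y, and equip X × Y with the maximum metric. Then for all δ > 0 and ν ∈ (0,1]: Span(f×g, δ, ν) ≤ Span(f, δ, ν/2) · Span(g, δ, ν/2). -/
open Filter Metric Set

/-- `Sn f δ x y n` counts the times `0 ≤ k < n` with `dist (f^[k] x) (f^[k] y) ≥ δ`. -/
noncomputable def Sn {X : Type*} [PseudoMetricSpace X] (f : X → X) (δ : ℝ) (x y : X)
    (n : ℕ) : ℕ :=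
  Set.ncard {k : ℕ | k < n ∧ δ ≤ dist (f^[k] x) (f^[k] y)}

/-- asymptotic separation frequency `limsup_n S_n(f,δ,x,y)/n`. -/
noncomputable def sepFreq {X : Type*} [PseudoMetricSpace X] (f : X → X) (δ : ℝ) (x y : X) : ℝ :=
  Filter.limsup (fun n : ℕ => (Sn f δ x y n : ℝ) / n) Filter.atTop

/-- A set is `(f,δ,ν)`-separated if all pairs of distinct points are `(f,δ,ν)`-separated. -/
def IsSeparatedSet {X : Type*} [PseudoMetricSpace X] (f : X → X) (δ ν : ℝ) (S : Set X) : Prop :=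
  ∀ x ∈ S, ∀ y ∈ S, x ≠ y → ν ≤ sepFreq f δ x y

/-- A set is `(f,δ,ν)`-spanning if every point has a companion in it with separation
frequency `< ν`. -/
def IsSpanningSet {X : Type*} [PseudoMetricSpace X] (f : X → X) (δ ν : ℝ) (S : Set X) : Prop :=
  ∀ x : X, ∃ y ∈ S, sepFreq f δ x y < ν

/-- `SepNum f δ ν`: supremal cardinality of an `(f,δ,ν)`-separated set. -/
noncomputable def SepNum {X : Type*} [PseudoMetricSpace X] (f : X → X) (δ ν : ℝ) : ℕ∞ :=
  ⨆ (S : Set X) (_ : IsSeparatedSet f δ ν S), S.encard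

/-- `SpanNum f δ ν`: minimal cardinality of an `(f,δ,ν)`-spanning set. -/
noncomputable def SpanNum {X : Type*} [PseudoMetricSpace X] (f : X → X) (δ ν : ℝ) : ℕ∞ :=
  ⨅ (S : Set X) (_ : IsSpanningSet f δ ν S), S.encard

/-! If `S` is `(f,δ,ν/2)`-spanning and `T` is `(g,δ,ν/2)`-spanning, then `S ×ˢ T` is
`(f×g,δ,ν)`-spanning: for the maximum metric, a time at which the product orbits are `δ`-apart
is a time at which one of the coordinate orbits is, so `S_n` of the product is at most the sum of
the coordinate `S_n`'s, and `limsup` is subadditive. Spanning sets of minimal cardinality exist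
since `ℕ∞` is well ordered, and `S ×ˢ T` has cardinality `#S · #T`. -/

section SeparationFrequency

variable {X : Type*} [PseudoMetricSpace X] (f : X → X) (δ : ℝ) (x y : X)

lemma Sn_le (n : ℕ) : Sn f δ x y n ≤ n :=
  (ncard_le_ncard (fun _ hk => hk.1) (finite_Iio n)).trans_eq (ncard_Iio_nat n)

lemma Sn_div_le_one (n : ℕ) : (Sn f δ x y n : ℝ) / n ≤ 1 :=
  div_le_one_of_le₀ (by exact_mod_cast Sn_le f δ x y n) n.cast_nonneg

lemma isBoundedUnder_ge_Sn_div :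
    IsBoundedUnder (· ≥ ·) atTop fun n : ℕ => (Sn f δ x y n : ℝ) / n :=
  isBoundedUnder_of ⟨0, fun _ => by positivity⟩

lemma isBoundedUnder_le_Sn_div :
    IsBoundedUnder (· ≤ ·) atTop fun n : ℕ => (Sn f δ x y n : ℝ) / n :=
  isBoundedUnder_of ⟨1, Sn_div_le_one f δ x y⟩

variable {δ}

lemma sepFreq_self (hδ : 0 < δ) : sepFreq f δ x x = 0 := by
  have hSn : ∀ n, Sn f δ x x n = 0 := fun n => by
    simp [Sn, dist_self, not_le.2 hδ]
  simp [sepFreq, hSn]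

end SeparationFrequency

lemma Sn_prodMap_le {X Y : Type*} [PseudoMetricSpace X] [PseudoMetricSpace Y]
    (f : X → X) (g : Y → Y) (δ : ℝ) (p q : X × Y) (n : ℕ) :
    Sn (Prod.map f g) δ p q n ≤ Sn f δ p.1 q.1 n + Sn g δ p.2 q.2 n := by
  refine (ncard_le_ncard ?_ ((finite_Iio n).subset fun k hk => ?_)).trans (ncard_union_le _ _)
  · rintro k ⟨hkn, hk⟩
    rw [Prod.map_iterate, Prod.dist_eq, le_max_iff] at hk
    exact hk.imp (⟨hkn, ·⟩) (⟨hkn, ·⟩)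
  · rcases hk with hk | hk <;> exact hk.1

lemma sepFreq_prodMap_le {X Y : Type*} [PseudoMetricSpace X] [PseudoMetricSpace Y]
    (f : X → X) (g : Y → Y) (δ : ℝ) (p q : X × Y) :
    sepFreq (Prod.map f g) δ p q ≤ sepFreq f δ p.1 q.1 + sepFreq g δ p.2 q.2 := by
  have hle : ∀ n : ℕ, (Sn (Prod.map f g) δ p q n : ℝ) / n
      ≤ (Sn f δ p.1 q.1 n : ℝ) / n + (Sn g δ p.2 q.2 n : ℝ) / n := fun n => by
    rw [← add_div]
    gcongr
    exact_mod_cast Sn_prodMap_le f g δ p q n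
  calc sepFreq (Prod.map f g) δ p q
      ≤ limsup ((fun n : ℕ => (Sn f δ p.1 q.1 n : ℝ) / n)
          + fun n : ℕ => (Sn g δ p.2 q.2 n : ℝ) / n) atTop :=
        limsup_le_limsup (Eventually.of_forall hle)
          (isBoundedUnder_ge_Sn_div (Prod.map f g) δ p q).isCoboundedUnder_le
          (isBoundedUnder_le_add (isBoundedUnder_le_Sn_div f δ _ _)
            (isBoundedUnder_le_Sn_div g δ _ _))
    _ ≤ sepFreq f δ p.1 q.1 + sepFreq g δ p.2 q.2 :=
        limsup_add_le (isBoundedUnder_ge_Sn_div f δ _ _) (isBoundedUnder_le_Sn_div f δ _ _)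
          (isBoundedUnder_ge_Sn_div g δ _ _).isCoboundedUnder_le
          (isBoundedUnder_le_Sn_div g δ _ _)

section Spanning

variable {X : Type*} [PseudoMetricSpace X] (f : X → X) {δ ν : ℝ}

lemma isSpanningSet_univ (hδ : 0 < δ) (hν : 0 < ν) : IsSpanningSet f δ ν univ :=
  fun x => ⟨x, mem_univ x, (sepFreq_self f x hδ).trans_lt hν⟩

lemma spanNum_le_encard {S : Set X} (hS : IsSpanningSet f δ ν S) : SpanNum f δ ν ≤ S.encard :=
  iInf₂_le S hS

lemma exists_isSpanningSet_encard_eq_spanNum (h : ∃ S, IsSpanningSet f δ ν S) :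
    ∃ S, IsSpanningSet f δ ν S ∧ S.encard = SpanNum f δ ν := by
  have : Nonempty {S : Set X // IsSpanningSet f δ ν S} := h.elim fun S hS => ⟨⟨S, hS⟩⟩
  obtain ⟨⟨S, hS⟩, hmin⟩ := ciInf_mem fun S : {S : Set X // IsSpanningSet f δ ν S} => S.1.encard
  exact ⟨S, hS, hmin.trans iInf_subtype⟩

end Spanning

lemma IsSpanningSet.prodMap {X Y : Type*} [PseudoMetricSpace X] [PseudoMetricSpace Y]
    {f : X → X} {g : Y → Y} {δ ν ν' : ℝ} {S : Set X} {T : Set Y}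
    (hS : IsSpanningSet f δ ν S) (hT : IsSpanningSet g δ ν' T) :
    IsSpanningSet (Prod.map f g) δ (ν + ν') (S ×ˢ T) := by
  rintro ⟨x, y⟩
  obtain ⟨a, haS, ha⟩ := hS x
  obtain ⟨b, hbT, hb⟩ := hT y
  exact ⟨(a, b), mk_mem_prod haS hbT,
    (sepFreq_prodMap_le f g δ (x, y) (a, b)).trans_lt (add_lt_add ha hb)⟩

/-- `Span(f×g,δ,ν) ≤ Span(f,δ,ν/2) · Span(g,δ,ν/2)`, where `X × Y`
carries the maximum metric. -/
theorem spanNum_prod_le {X Y : Type*} [MetricSpace X] [MetricSpace Y]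
    (f : X → X) (g : Y → Y) (δ ν : ℝ) (hδ : 0 < δ) (hν : ν ∈ Set.Ioc (0 : ℝ) 1) :
    SpanNum (Prod.map f g) δ ν ≤ SpanNum f δ (ν / 2) * SpanNum g δ (ν / 2) := by
  have hν₂ : 0 < ν / 2 := half_pos hν.1
  obtain ⟨S, hS, hScard⟩ :=
    exists_isSpanningSet_encard_eq_spanNum f ⟨univ, isSpanningSet_univ f hδ hν₂⟩
  obtain ⟨T, hT, hTcard⟩ :=
    exists_isSpanningSet_encard_eq_spanNum g ⟨univ, isSpanningSet_univ g hδ hν₂⟩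
  have hST : IsSpanningSet (Prod.map f g) δ ν (S ×ˢ T) := by
    simpa only [add_halves] using hS.prodMap hT
  calc SpanNum (Prod.map f g) δ ν ≤ (S ×ˢ T).encard := spanNum_le_encard _ hST
    _ = SpanNum f δ (ν / 2) * SpanNum g δ (ν / 2) := by rw [encard_prod, hScard, hTcard]
end

section
/- Let (X,d) be a metric space and f: X → X uniformly continuous, m ∈ ℕ with m ≥ 1. For every δ > 0 there exists δ' > 0 such that any two points that are (f,δ,ν)-separated are also (f^m,δ',ν)-separated; consequently Sep(f^m, δ', ν) ≥ Sep(f, δ, ν) for all ν ∈ (0,1]. -/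
/-!
Choose `δ'` by uniform equicontinuity of `f, f², …, f^(m-1)`: if the orbits of `x` and `y` are
`δ'`-close at a time `m j`, they stay `δ`-close during the whole block `[m j, m j + m)`. Hence
every time `k` at which the `f`-orbits are `δ`-apart lies in a block whose start `m ⌊k/m⌋` is a
`δ'`-separation time of the `f^m`-orbits, so `S_n(f,δ) ≤ m · S_{⌊n/m⌋+1}(f^m,δ')`. Dividing by
`n` and passing to the limsup gives `sepFreq f δ ≤ sepFreq f^m δ'`, from which both claims follow.
-/

open Filter Metric Set

theorem Finset.card_filter_range_le_mul {p q : ℕ → Prop} [DecidablePred p] [DecidablePred q]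
    {m : ℕ} (hm : 0 < m) (hpq : ∀ k, p k → q (k / m)) (n : ℕ) :
    ((Finset.range n).filter p).card ≤ m * ((Finset.range (n / m + 1)).filter q).card := by
  calc ((Finset.range n).filter p).card
      ≤ (((Finset.range (n / m + 1)).filter q) ×ˢ Finset.range m).card := by
        refine Finset.card_le_card_of_injOn (fun k => (k / m, k % m)) ?_ ?_
        · intro k hk
          simp only [Finset.coe_filter, Finset.mem_range, Set.mem_ofPred_eq] at hk
          simp only [Finset.coe_product, Finset.coe_filter, Finset.coe_range, Set.mem_prod,
            Set.mem_ofPred_eq, Finset.mem_range, Set.mem_Iio]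
          exact ⟨⟨Nat.lt_succ_of_le (Nat.div_le_div_right hk.1.le), hpq k hk.2⟩, Nat.mod_lt k hm⟩
        · intro k _ l _ hkl
          simp only [Prod.mk.injEq] at hkl
          rw [← Nat.div_add_mod k m, ← Nat.div_add_mod l m, hkl.1, hkl.2]
    _ = m * ((Finset.range (n / m + 1)).filter q).card := by
        rw [Finset.card_product, Finset.card_range, mul_comm]

theorem limsup_le_limsup_of_le_comp_add {u v e : ℕ → ℝ} {q : ℕ → ℕ}
    (hq : Tendsto q atTop atTop) (he : Tendsto e atTop (nhds 0))
    (hu : IsBoundedUnder (· ≥ ·) atTop u) (hv : IsBoundedUnder (· ≤ ·) atTop v)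
    (h : ∀ᶠ n in atTop, u n ≤ v (q n) + e n) :
    limsup u atTop ≤ limsup v atTop := by
  refine le_of_forall_pos_le_add fun ε hε => limsup_le_of_le hu.isCobounded_le ?_
  have hvq : ∀ᶠ n in atTop, v (q n) < limsup v atTop + ε / 2 :=
    hq.eventually (eventually_lt_of_limsup_lt (by linarith) hv)
  have he' : ∀ᶠ n in atTop, e n < ε / 2 := he.eventually_lt_const (half_pos hε)
  filter_upwards [h, hvq, he'] with n hn hvn hen
  linarith

theorem limsup_div_le_limsup_div {a b : ℕ → ℕ} {m : ℕ} (hm : 0 < m) (hb : ∀ j, b j ≤ j)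
    (hab : ∀ n, a n ≤ m * b (n / m + 1)) :
    limsup (fun n => (a n : ℝ) / n) atTop ≤ limsup (fun j => (b j : ℝ) / j) atTop := by
  have hb_div : ∀ j, (b j : ℝ) / j ≤ 1 := fun j =>
    div_le_one_of_le₀ (by exact_mod_cast hb j) (Nat.cast_nonneg j)
  refine limsup_le_limsup_of_le_comp_add (q := fun n => n / m + 1) (e := fun n => (m : ℝ) / n)
    ?_ (tendsto_const_div_atTop_nhds_zero_nat _) (isBoundedUnder_of ⟨0, fun n => by positivity⟩)
    (isBoundedUnder_of ⟨1, hb_div⟩) ((eventually_gt_atTop 0).mono fun n hn => ?_)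
  · exact (tendsto_add_atTop_nat 1).comp (Nat.tendsto_div_const_atTop hm.ne')
  set q := n / m + 1
  have hmq : (m : ℝ) * q ≤ n + m := by
    have := Nat.mul_div_le n m
    exact_mod_cast (show m * q ≤ n + m by simp only [q]; lia)
  have hq : (0 : ℝ) < q := by positivity
  rw [div_le_iff₀ (by exact_mod_cast hn), add_mul, div_mul_cancel₀ _ (by positivity)]
  calc (a n : ℝ) ≤ m * b q := by exact_mod_cast hab n
    _ = m * q * (b q / q) := by field_simp
    _ ≤ (n + m) * (b q / q) := by gcongr
    _ ≤ b q / q * n + m := by nlinarith [hb_div q]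

section Separation

variable {X : Type*} [PseudoMetricSpace X]

theorem sn_eq_card (f : X → X) (δ : ℝ) (x y : X) (n : ℕ) :
    Sn f δ x y n = ((Finset.range n).filter fun k => δ ≤ dist (f^[k] x) (f^[k] y)).card := by
  rw [Sn, ← Set.ncard_coe_finset]
  congr 1
  ext k
  simp

theorem sn_le (f : X → X) (δ : ℝ) (x y : X) (n : ℕ) : Sn f δ x y n ≤ n := by
  rw [sn_eq_card]
  exact (Finset.card_filter_le _ _).trans (Finset.card_range n).le

theorem sn_le_mul_sn_iterate {f : X → X} {δ δ' : ℝ} {x y : X} {m : ℕ} (hm : 0 < m)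
    (hsep : ∀ k, δ ≤ dist (f^[k] x) (f^[k] y) →
      δ' ≤ dist ((f^[m])^[k / m] x) ((f^[m])^[k / m] y)) (n : ℕ) :
    Sn f δ x y n ≤ m * Sn (f^[m]) δ' x y (n / m + 1) := by
  rw [sn_eq_card, sn_eq_card]
  exact Finset.card_filter_range_le_mul hm hsep n

theorem sepFreq_le_sepFreq_iterate {f : X → X} {δ δ' : ℝ} {x y : X} {m : ℕ} (hm : 0 < m)
    (hsep : ∀ k, δ ≤ dist (f^[k] x) (f^[k] y) →
      δ' ≤ dist ((f^[m])^[k / m] x) ((f^[m])^[k / m] y)) :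
    sepFreq f δ x y ≤ sepFreq (f^[m]) δ' x y :=
  limsup_div_le_limsup_div hm (sn_le _ _ _ _) (sn_le_mul_sn_iterate hm hsep)

theorem UniformContinuous.exists_dist_iterate_lt {f : X → X} (hf : UniformContinuous f)
    (m : ℕ) {δ : ℝ} (hδ : 0 < δ) :
    ∃ δ' > 0, ∀ u v : X, dist u v < δ' → ∀ i < m, dist (f^[i] u) (f^[i] v) < δ := by
  obtain ⟨δ', hδ', h⟩ := Metric.uniformEquicontinuous_iff.1
    (uniformEquicontinuous_finite.2 fun i : Fin m => UniformContinuous.iterate f i hf) δ hδ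
  exact ⟨δ', hδ', fun u v huv i hi => h u v huv ⟨i, hi⟩⟩

theorem UniformContinuous.exists_sepFreq_le_sepFreq_iterate {f : X → X}
    (hf : UniformContinuous f) {m : ℕ} (hm : 0 < m) {δ : ℝ} (hδ : 0 < δ) :
    ∃ δ' > 0, ∀ x y : X, sepFreq f δ x y ≤ sepFreq (f^[m]) δ' x y := by
  obtain ⟨δ', hδ', h⟩ := hf.exists_dist_iterate_lt m hδ
  refine ⟨δ', hδ', fun x y => sepFreq_le_sepFreq_iterate hm fun k hk => ?_⟩
  by_contra! hlt
  have := h _ _ hlt (k % m) (Nat.mod_lt k hm)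
  rw [← Function.iterate_mul, ← Function.iterate_add_apply, ← Function.iterate_add_apply,
    Nat.mod_add_div k m] at this
  linarith

theorem sepNum_mono {f g : X → X} {δ δ' : ℝ}
    (h : ∀ x y : X, sepFreq f δ x y ≤ sepFreq g δ' x y) (ν : ℝ) :
    SepNum f δ ν ≤ SepNum g δ' ν :=
  iSup₂_le fun S hS => le_iSup₂_of_le S (fun x hx y hy hxy => (hS x hx y hy hxy).trans (h x y))
    le_rfl

end Separation

/-- for uniformly continuous `f` and `m ≥ 1`, for every `δ > 0` there is
`δ' > 0` such that `(f,δ,ν)`-separated points are `(f^m,δ',ν)`-separated; consequently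
`Sep(f^m,δ',ν) ≥ Sep(f,δ,ν)` for all `ν ∈ (0,1]`. -/
theorem sepNum_iterate_ge {X : Type*} [MetricSpace X] (f : X → X)
    (hf : UniformContinuous f) (m : ℕ) (hm : 1 ≤ m) :
    ∀ δ > (0 : ℝ), ∃ δ' > (0 : ℝ),
      (∀ ν ∈ Set.Ioc (0 : ℝ) 1, ∀ x y : X,
        ν ≤ sepFreq f δ x y → ν ≤ sepFreq (f^[m]) δ' x y) ∧
      (∀ ν ∈ Set.Ioc (0 : ℝ) 1, SepNum f δ ν ≤ SepNum (f^[m]) δ' ν) := by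
  intro δ hδ
  obtain ⟨δ', hδ', h⟩ := hf.exists_sepFreq_le_sepFreq_iterate hm hδ
  exact ⟨δ', hδ', fun ν _ x y hν => hν.trans (h x y), fun ν _ => sepNum_mono h ν⟩
end
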